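/- arXiv:2407.05281 — 3 statements merged into one kernel-verified Lean document; each statement's English description precedes it below -/
import Mathlib

section
/- Let S₁,…,Sₙ be i.i.d. with P(S > n) = n^{-β}L(n), β > 0, L slowly varying. Let β̂ₙ(k) = ln p̂ₙ_k − ln p̂ₙ_{k+1} where p̂ₙ_l = (1/n)∑1{S_i > e^l}, and β(k) = ln p_k − ln p_{k+1}. Fix δ ∈ (0,1/2) and uₙ(δ) = ln(2/δ)/n. If p_{k+1} ≥ 16 uₙ(δ), then with probability at least 1 − 2δ, |β̂ₙ(k) − β| ≤ 6√(uₙ(δ)/p_{k+1}) + |ln(L(e^k)/L(e^{k+1}))|. -/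
open MeasureTheory ProbabilityTheory Filter Real

lemma exp_cubic_bound {x : ℝ} (h : |x| ≤ 1) :
    Real.exp x ≤ 1 + x + x ^ 2 / 2 + (2 / 9) * |x| ^ 3 := by
  have h3 := Real.exp_bound h (n := 3) (by norm_num)
  have hs : ∑ i ∈ Finset.range 3, x ^ i / (Nat.factorial i : ℝ) = 1 + x + x ^ 2 / 2 := by
    simp [Finset.sum_range_succ, Nat.factorial]
  rw [hs] at h3
  have : Real.exp x - (1 + x + x ^ 2 / 2) ≤ |x| ^ 3 * ((3 : ℕ).succ / ((Nat.factorial 3 : ℝ) * 3)) :=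
    (le_abs_self _).trans h3
  have hfac : ((3 : ℕ).succ / ((Nat.factorial 3 : ℝ) * 3) : ℝ) = 2 / 9 := by
    norm_num [Nat.factorial]
  rw [hfac] at this
  linarith

/-- The key exponent computation for both Chernoff tails. -/
lemma key_exponent {q u : ℝ} (hu : 0 < u) (h16 : 16 * u ≤ q) :
    q * (Real.exp ((6 / 5) * Real.sqrt (u / q)) - 1 - (6 / 5) * Real.sqrt (u / q))
        ≤ (6 / 5) * Real.sqrt (u / q) * ((38 / 25) * Real.sqrt (q * u)) - u
    ∧ q * (Real.exp (-((6 / 5) * Real.sqrt (u / q))) - 1 + (6 / 5) * Real.sqrt (u / q))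
        ≤ (6 / 5) * Real.sqrt (u / q) * ((38 / 25) * Real.sqrt (q * u)) - u := by
  have hq : 0 < q := lt_of_lt_of_le (by linarith) h16
  set s := Real.sqrt (u / q) with hs
  have hs0 : 0 ≤ s := Real.sqrt_nonneg _
  have hs2 : s ^ 2 = u / q := Real.sq_sqrt (by positivity)
  have hqs2 : q * s ^ 2 = u := by rw [hs2]; field_simp
  have hsle : s ≤ 1 / 4 := by
    have : s ^ 2 ≤ (1 / 4 : ℝ) ^ 2 := by rw [hs2]; rw [div_le_iff₀ hq] <;> nlinarith
    nlinarith
  have hqu : Real.sqrt (q * u) = q * s := by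
    have hsq : (q * s) ^ 2 = q * u := by rw [mul_pow, hs2]; field_simp
    rw [← hsq, Real.sqrt_sq (by positivity)]
  have hl1 : |(6 / 5) * s| ≤ 1 := by rw [abs_of_nonneg (by positivity)]; linarith
  have hl2 : |(-((6 / 5) * s))| ≤ 1 := by rwa [abs_neg]
  have e1 := exp_cubic_bound hl1
  have e2 := exp_cubic_bound hl2
  rw [abs_of_nonneg (by positivity : (0:ℝ) ≤ (6 / 5) * s)] at e1
  rw [abs_neg, abs_of_nonneg (by positivity : (0:ℝ) ≤ (6 / 5) * s)] at e2
  rw [hqu]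
  have hqs3 : q * s ^ 3 ≤ u / 4 := by
    have : q * s ^ 3 = u * s := by rw [pow_succ, ← mul_assoc, hqs2]
    rw [this]; nlinarith
  constructor <;> nlinarith [mul_le_mul_of_nonneg_left e1 hq.le, mul_le_mul_of_nonneg_left e2 hq.le]

lemma log_close {a b η : ℝ} (hb : 0 < b) (hη : η ≤ 38 / 100) (hle : |a - b| ≤ η * b) :
    |Real.log a - Real.log b| ≤ (50 / 31) * η := by
  have hη0 : 0 ≤ η := by
    by_contra hc
    push_neg at hc
    nlinarith [abs_nonneg (a - b)]
  have h1 : -(η * b) ≤ a - b ∧ a - b ≤ η * b := abs_le.mp hle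
  have ha : (62 / 100) * b ≤ a := by nlinarith [h1.1]
  have ha0 : 0 < a := lt_of_lt_of_le (by nlinarith) ha
  have hup : Real.log a - Real.log b ≤ (50 / 31) * η := by
    rw [← Real.log_div ha0.ne' hb.ne']
    have := Real.log_le_sub_one_of_pos (x := a / b) (by positivity)
    have hab : a / b - 1 ≤ η := by
      rw [div_sub_one hb.ne']
      rw [div_le_iff₀ hb]
      nlinarith [h1.2]
    nlinarith
  have hlo : -((50 / 31) * η) ≤ Real.log a - Real.log b := by
    have := Real.log_le_sub_one_of_pos (x := b / a) (by positivity)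
    have hba : b / a - 1 ≤ (50 / 31) * η := by
      rw [div_sub_one ha0.ne']
      rw [div_le_iff₀ ha0]
      nlinarith [h1.1, ha]
    have hlog : Real.log b - Real.log a ≤ (50 / 31) * η := by
      rw [← Real.log_div hb.ne' ha0.ne']
      nlinarith
    linarith
  exact abs_le.mpr ⟨hlo, hup⟩

lemma sqrt_mul_div {p u : ℝ} (hp : 0 < p) (hu : 0 ≤ u) :
    Real.sqrt (p * u) = p * Real.sqrt (u / p) := by
  have hsq : (p * Real.sqrt (u / p)) ^ 2 = p * u := by
    rw [mul_pow, Real.sq_sqrt (by positivity)]; field_simp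
  rw [← hsq, Real.sqrt_sq (by positivity)]

lemma sqrt_le_quarter {p u : ℝ} (hp : 0 < p) (hu : 0 < u) (h16 : 16 * u ≤ p) :
    Real.sqrt (u / p) ≤ 1 / 4 := by
  rw [show (1 / 4 : ℝ) = Real.sqrt (1 / 16) by
    rw [show (1/16 : ℝ) = (1/4)^2 by norm_num, Real.sqrt_sq (by norm_num)]]
  apply Real.sqrt_le_sqrt
  rw [div_le_div_iff₀ hp (by norm_num)]
  nlinarith

lemma det_part {ak ak1 pk pk1 u D b : ℝ} (hu : 0 < u) (h16 : 16 * u ≤ pk1) (hmono : pk1 ≤ pk)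
    (h1 : |ak - pk| ≤ (38 / 25) * Real.sqrt (pk * u))
    (h2 : |ak1 - pk1| ≤ (38 / 25) * Real.sqrt (pk1 * u))
    (hb : Real.log pk - Real.log pk1 = b + D) :
    |(Real.log ak - Real.log ak1) - b| ≤ 6 * Real.sqrt (u / pk1) + |D| := by
  have hpk1 : 0 < pk1 := lt_of_lt_of_le (by linarith) h16
  have hpk : 0 < pk := lt_of_lt_of_le hpk1 hmono
  have hsk : Real.sqrt (u / pk) ≤ 1 / 4 := sqrt_le_quarter hpk hu (by linarith)
  have hsk1 : Real.sqrt (u / pk1) ≤ 1 / 4 := sqrt_le_quarter hpk1 hu h16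
  have hmono' : Real.sqrt (u / pk) ≤ Real.sqrt (u / pk1) :=
    Real.sqrt_le_sqrt (div_le_div_of_nonneg_left hu.le hpk1 hmono)
  rw [sqrt_mul_div hpk hu.le] at h1
  rw [sqrt_mul_div hpk1 hu.le] at h2
  have e1 : |Real.log ak - Real.log pk| ≤ (50 / 31) * ((38 / 25) * Real.sqrt (u / pk)) :=
    log_close hpk (by nlinarith [Real.sqrt_nonneg (u / pk)])
      (by rw [mul_assoc]; linarith)
  have e2 : |Real.log ak1 - Real.log pk1| ≤ (50 / 31) * ((38 / 25) * Real.sqrt (u / pk1)) :=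
    log_close hpk1 (by nlinarith [Real.sqrt_nonneg (u / pk1)])
      (by rw [mul_assoc]; linarith)
  have habs1 := abs_le.mp e1
  have habs2 := abs_le.mp e2
  have habsD := le_abs_self D
  have habsD' := neg_abs_le D
  rw [abs_le]
  constructor <;> nlinarith [Real.sqrt_nonneg (u / pk1)]

lemma binom_tail {Ω : Type*} [MeasurableSpace Ω] {μ : Measure Ω} [IsProbabilityMeasure μ]
    {Y : ℕ → Ω → ℝ} (hYmeas : ∀ i, Measurable (Y i))
    (hYind : iIndepFun Y μ)
    (hY01 : ∀ i ω, Y i ω = 0 ∨ Y i ω = 1)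
    {q : ℝ} (hq : ∀ i, ∫ ω, Y i ω ∂μ = q)
    {n : ℕ} (hn : 0 < n) {u : ℝ} (hu : 0 < u) (h16 : 16 * u ≤ q) :
    μ {ω | (38 / 25) * Real.sqrt (q * u) <
        |(1 / (n : ℝ)) * ∑ i ∈ Finset.range n, Y i ω - q|}
      ≤ ENNReal.ofReal (2 * Real.exp (-(n : ℝ) * u)) := by
  have hq0 : 0 < q := lt_of_lt_of_le (by linarith) h16
  have hInt : ∀ i, Integrable (Y i) μ := by
    intro i
    refine Integrable.mono' (integrable_const 1) (hYmeas i).aestronglyMeasurable ?_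
    filter_upwards with ω
    rcases hY01 i ω with h | h <;> simp [h]
  have hq1 : q ≤ 1 := by
    rw [← hq 0]
    calc ∫ ω, Y 0 ω ∂μ ≤ ∫ _, (1 : ℝ) ∂μ := by
          refine integral_mono (hInt 0) (integrable_const 1) fun ω => ?_
          rcases hY01 0 ω with h | h <;> simp [h]
      _ = 1 := by simp
  -- pointwise exponential identity
  have hptw : ∀ (t : ℝ) (i : ℕ) (ω : Ω),
      Real.exp (t * Y i ω) = 1 + (Real.exp t - 1) * Y i ω := by
    intro t i ω
    rcases hY01 i ω with h | h <;> simp [h]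
  have hIntExp : ∀ (t : ℝ) (i : ℕ), Integrable (fun ω => Real.exp (t * Y i ω)) μ := by
    intro t i
    have : (fun ω => Real.exp (t * Y i ω)) = fun ω => 1 + (Real.exp t - 1) * Y i ω := by
      funext ω; exact hptw t i ω
    rw [this]
    exact (integrable_const 1).add ((hInt i).const_mul _)
  have hmgf : ∀ (t : ℝ) (i : ℕ), mgf (Y i) μ t = 1 + (Real.exp t - 1) * q := by
    intro t i
    rw [mgf]
    have : (fun ω => Real.exp (t * Y i ω)) = fun ω => 1 + (Real.exp t - 1) * Y i ω := by
      funext ω; exact hptw t i ω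
    rw [this, integral_add (integrable_const 1) ((hInt i).const_mul _),
      integral_const, integral_const_mul, hq i]
    simp
  have hmgfT : ∀ t : ℝ, mgf (∑ i ∈ Finset.range n, Y i) μ t = (1 + (Real.exp t - 1) * q) ^ n := by
    intro t
    rw [hYind.mgf_sum hYmeas]
    rw [Finset.prod_congr rfl fun i _ => hmgf t i, Finset.prod_const, Finset.card_range]
  have hIntExpT : ∀ t : ℝ, Integrable (fun ω => Real.exp (t * (∑ i ∈ Finset.range n, Y i) ω)) μ :=
    fun t => hYind.integrable_exp_mul_sum hYmeas fun i _ => hIntExp t i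
  set s : ℝ := Real.sqrt (u / q) with hs
  set lam : ℝ := (6 / 5) * s with hlam
  set tt : ℝ := (38 / 25) * Real.sqrt (q * u) with htt
  have hs0 : 0 ≤ s := Real.sqrt_nonneg _
  have hlam0 : 0 ≤ lam := by positivity
  obtain ⟨hkey1, hkey2⟩ := key_exponent hu h16
  simp only [← htt, ← hs, ← hlam] at hkey1 hkey2
  -- the generic mgf-product bound
  have hbase : ∀ t : ℝ, (1 + (Real.exp t - 1) * q) ^ n ≤ Real.exp ((n : ℝ) * (q * (Real.exp t - 1))) := by
    intro t
    rw [Real.exp_nat_mul]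
    refine pow_le_pow_left₀ ?_ ?_ n
    · rcases le_or_gt 1 (Real.exp t) with h | h
      · nlinarith
      · nlinarith [Real.exp_pos t]
    · have := Real.add_one_le_exp (q * (Real.exp t - 1))
      nlinarith
  -- upper tail
  have hA : (μ {ω | (n : ℝ) * (q + tt) ≤ (∑ i ∈ Finset.range n, Y i) ω}).toReal
      ≤ Real.exp (-(n : ℝ) * u) := by
    calc (μ {ω | (n : ℝ) * (q + tt) ≤ (∑ i ∈ Finset.range n, Y i) ω}).toReal
        ≤ Real.exp (-lam * ((n : ℝ) * (q + tt))) * mgf (∑ i ∈ Finset.range n, Y i) μ lam :=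
          measure_ge_le_exp_mul_mgf _ hlam0 (hIntExpT lam)
      _ ≤ Real.exp (-lam * ((n : ℝ) * (q + tt))) * Real.exp ((n : ℝ) * (q * (Real.exp lam - 1))) := by
          rw [hmgfT]
          exact mul_le_mul_of_nonneg_left (hbase lam) (Real.exp_pos _).le
      _ = Real.exp ((n : ℝ) * (q * (Real.exp lam - 1 - lam) - lam * tt)) := by
          rw [← Real.exp_add]; ring_nf
      _ ≤ Real.exp (-(n : ℝ) * u) := by
          apply Real.exp_le_exp.mpr
          have hle : q * (Real.exp lam - 1 - lam) - lam * tt ≤ -u := by linarith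
          calc (n : ℝ) * (q * (Real.exp lam - 1 - lam) - lam * tt) ≤ (n : ℝ) * (-u) := by
                exact mul_le_mul_of_nonneg_left hle (Nat.cast_nonneg n)
            _ = -(n : ℝ) * u := by ring
  -- lower tail
  have hB : (μ {ω | (∑ i ∈ Finset.range n, Y i) ω ≤ (n : ℝ) * (q - tt)}).toReal
      ≤ Real.exp (-(n : ℝ) * u) := by
    calc (μ {ω | (∑ i ∈ Finset.range n, Y i) ω ≤ (n : ℝ) * (q - tt)}).toReal
        ≤ Real.exp (-(-lam) * ((n : ℝ) * (q - tt))) * mgf (∑ i ∈ Finset.range n, Y i) μ (-lam) :=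
          measure_le_le_exp_mul_mgf _ (neg_nonpos.mpr hlam0) (hIntExpT (-lam))
      _ ≤ Real.exp (lam * ((n : ℝ) * (q - tt))) * Real.exp ((n : ℝ) * (q * (Real.exp (-lam) - 1))) := by
          rw [hmgfT, neg_neg]
          exact mul_le_mul_of_nonneg_left (hbase (-lam)) (Real.exp_pos _).le
      _ = Real.exp ((n : ℝ) * (q * (Real.exp (-lam) - 1 + lam) - lam * tt)) := by
          rw [← Real.exp_add]; ring_nf
      _ ≤ Real.exp (-(n : ℝ) * u) := by
          apply Real.exp_le_exp.mpr
          have hle : q * (Real.exp (-lam) - 1 + lam) - lam * tt ≤ -u := by linarith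
          calc (n : ℝ) * (q * (Real.exp (-lam) - 1 + lam) - lam * tt) ≤ (n : ℝ) * (-u) := by
                exact mul_le_mul_of_nonneg_left hle (Nat.cast_nonneg n)
            _ = -(n : ℝ) * u := by ring
  -- combine
  have hsub : {ω | tt < |(1 / (n : ℝ)) * ∑ i ∈ Finset.range n, Y i ω - q|}
      ⊆ {ω | (n : ℝ) * (q + tt) ≤ (∑ i ∈ Finset.range n, Y i) ω}
        ∪ {ω | (∑ i ∈ Finset.range n, Y i) ω ≤ (n : ℝ) * (q - tt)} := by
    intro ω hω
    simp only [Set.mem_setOf_eq] at hω ⊢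
    have hn0 : (0 : ℝ) < (n : ℝ) := Nat.cast_pos.mpr hn
    have hTapp : (∑ i ∈ Finset.range n, Y i) ω = ∑ i ∈ Finset.range n, Y i ω := by
      simp [Finset.sum_apply]
    rcases lt_abs.mp hω with h | h
    · left
      simp only [Set.mem_setOf_eq, hTapp]
      have : q + tt < (1 / (n : ℝ)) * ∑ i ∈ Finset.range n, Y i ω := by linarith
      calc (n : ℝ) * (q + tt) ≤ (n : ℝ) * ((1 / (n : ℝ)) * ∑ i ∈ Finset.range n, Y i ω) :=
            mul_le_mul_of_nonneg_left this.le hn0.le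
        _ = ∑ i ∈ Finset.range n, Y i ω := by field_simp
    · right
      simp only [Set.mem_setOf_eq, hTapp]
      have : (1 / (n : ℝ)) * ∑ i ∈ Finset.range n, Y i ω < q - tt := by linarith
      calc ∑ i ∈ Finset.range n, Y i ω
          = (n : ℝ) * ((1 / (n : ℝ)) * ∑ i ∈ Finset.range n, Y i ω) := by field_simp
        _ ≤ (n : ℝ) * (q - tt) := mul_le_mul_of_nonneg_left this.le hn0.le
  calc μ {ω | tt < |(1 / (n : ℝ)) * ∑ i ∈ Finset.range n, Y i ω - q|}
      ≤ μ ({ω | (n : ℝ) * (q + tt) ≤ (∑ i ∈ Finset.range n, Y i) ω}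
          ∪ {ω | (∑ i ∈ Finset.range n, Y i) ω ≤ (n : ℝ) * (q - tt)}) := measure_mono hsub
    _ ≤ μ {ω | (n : ℝ) * (q + tt) ≤ (∑ i ∈ Finset.range n, Y i) ω}
        + μ {ω | (∑ i ∈ Finset.range n, Y i) ω ≤ (n : ℝ) * (q - tt)} := measure_union_le _ _
    _ ≤ ENNReal.ofReal (Real.exp (-(n : ℝ) * u)) + ENNReal.ofReal (Real.exp (-(n : ℝ) * u)) := by
        gcongr
        · exact (ENNReal.le_ofReal_iff_toReal_le (measure_ne_top μ _) (Real.exp_pos _).le).mpr hA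
        · exact (ENNReal.le_ofReal_iff_toReal_le (measure_ne_top μ _) (Real.exp_pos _).le).mpr hB
    _ = ENNReal.ofReal (2 * Real.exp (-(n : ℝ) * u)) := by
        rw [← ENNReal.ofReal_add (Real.exp_pos _).le (Real.exp_pos _).le]
        ring_nf

/-- Non-asymptotic deviation bound for the tail index estimator in the discrete
generalized Pareto i.i.d. model: if `p_{k+1} ≥ 16 uₙ(δ)`, then with probability at
least `1 - 2δ`, `|β̂ₙ(k) - β| ≤ 6 √(uₙ(δ)/p_{k+1}) + |ln(L(e^k)/L(e^{k+1}))|`. -/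
theorem stmt_5 {Ω : Type*} [MeasurableSpace Ω] (μ : Measure Ω) [IsProbabilityMeasure μ]
    (S : ℕ → Ω → ℝ) (hmeas : ∀ i, Measurable (S i))
    (hindep : iIndepFun S μ)
    (hident : ∀ i, IdentDistrib (S i) (S 0) μ μ)
    (β : ℝ) (hβ : 0 < β) (L : ℝ → ℝ) (hLpos : ∀ x : ℝ, 0 < L x)
    (hL : ∀ l : ℝ, 0 < l →
      Tendsto (fun x : ℝ => L (l * x) / L x) atTop (nhds 1))
    (hsurv : ∀ x : ℝ, 1 ≤ x → (μ {ω | S 0 ω > x}).toReal = x ^ (-β) * L x)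
    (p : ℕ → ℝ) (hp : ∀ l : ℕ, p l = (μ {ω | S 0 ω > Real.exp l}).toReal)
    (n : ℕ) (hn : 0 < n)
    (phat : ℕ → Ω → ℝ)
    (hphat : ∀ l ω, phat l ω =
      (1 / n : ℝ) * ∑ i ∈ Finset.range n, (if S i ω > Real.exp l then (1 : ℝ) else 0))
    (k : ℕ) (δ : ℝ) (hδ : δ ∈ Set.Ioo (0 : ℝ) (1 / 2))
    (u : ℝ) (hu : u = Real.log (2 / δ) / n)
    (hcond : 16 * u ≤ p (k + 1)) :
    ENNReal.ofReal (1 - 2 * δ) ≤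
      μ {ω | |(Real.log (phat k ω) - Real.log (phat (k + 1) ω)) - β|
        ≤ 6 * Real.sqrt (u / p (k + 1))
          + |Real.log (L (Real.exp k) / L (Real.exp (k + 1)))|} := by
  obtain ⟨hδ0, hδh⟩ := hδ
  have hn0 : (0 : ℝ) < (n : ℝ) := Nat.cast_pos.mpr hn
  have hu0 : 0 < u := by
    rw [hu]
    apply div_pos _ hn0
    apply Real.log_pos
    rw [lt_div_iff₀ hδ0]; linarith
  have hnu : (n : ℝ) * u = Real.log (2 / δ) := by rw [hu]; field_simp
  have hexpδ : 2 * Real.exp (-(n : ℝ) * u) = δ := by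
    rw [neg_mul, Real.exp_neg, hnu, Real.exp_log (by positivity)]
    field_simp
  -- the indicator variables at level l
  set Y : ℕ → ℕ → Ω → ℝ := fun l i ω => if S i ω > Real.exp (l : ℝ) then (1 : ℝ) else 0 with hY
  have hYmeas : ∀ l i, Measurable (Y l i) := by
    intro l i
    exact Measurable.ite (measurableSet_lt measurable_const (hmeas i)) measurable_const
      measurable_const
  have hYind : ∀ l : ℕ, iIndepFun (Y l) μ := by
    intro l
    have : Y l = fun i => (fun x : ℝ => if Real.exp (l : ℝ) < x then (1 : ℝ) else 0) ∘ S i := rfl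
    rw [this]
    exact hindep.comp _ fun i => Measurable.ite measurableSet_Ioi measurable_const measurable_const
  have hY01 : ∀ l i ω, Y l i ω = 0 ∨ Y l i ω = 1 := by
    intro l i ω
    by_cases h : S i ω > Real.exp (l : ℝ) <;> simp [hY, h]
  have hYint : ∀ l i, ∫ ω, Y l i ω ∂μ = p l := by
    intro l i
    have hind : Y l i = (S i ⁻¹' Set.Ioi (Real.exp (l : ℝ))).indicator (fun _ => (1 : ℝ)) := by
      funext ω
      classical
      rw [Set.indicator_apply]
      simp only [Set.mem_preimage, Set.mem_Ioi]
      rfl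
    rw [hind, integral_indicator_const _ ((hmeas i) measurableSet_Ioi)]
    rw [measureReal_def]
    rw [(hident i).measure_mem_eq measurableSet_Ioi]
    rw [hp]
    have : S 0 ⁻¹' Set.Ioi (Real.exp (l : ℝ)) = {ω | S 0 ω > Real.exp (l : ℝ)} := rfl
    rw [this]
    simp
  -- monotonicity of p
  have hpmono : p (k + 1) ≤ p k := by
    rw [hp, hp]
    apply ENNReal.toReal_mono (measure_ne_top μ _)
    apply measure_mono
    intro ω hω
    simp only [Set.mem_setOf_eq] at hω ⊢
    have : Real.exp ((k : ℝ)) ≤ Real.exp ((k + 1 : ℕ) : ℝ) := by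
      apply Real.exp_le_exp.mpr
      push_cast; linarith
    linarith
  have hpk1 : 0 < p (k + 1) := lt_of_lt_of_le (by linarith) hcond
  have hcondk : 16 * u ≤ p k := le_trans hcond hpmono
  -- bad events
  set Bad : ℕ → Set Ω := fun l => {ω | (38 / 25) * Real.sqrt (p l * u) <
      |(1 / (n : ℝ)) * ∑ i ∈ Finset.range n, Y l i ω - p l|} with hBad
  have hBadMeas : ∀ l, MeasurableSet (Bad l) := by
    intro l
    apply measurableSet_lt measurable_const
    apply Measurable.abs
    exact (measurable_const.mul (Finset.measurable_sum _ fun i _ => hYmeas l i)).sub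
      measurable_const
  have hBadLe : ∀ l, 16 * u ≤ p l → μ (Bad l) ≤ ENNReal.ofReal δ := by
    intro l hl
    calc μ (Bad l) ≤ ENNReal.ofReal (2 * Real.exp (-(n : ℝ) * u)) :=
          binom_tail (hYmeas l) (hYind l) (hY01 l) (hYint l) hn hu0 hl
      _ = ENNReal.ofReal δ := by rw [hexpδ]
  -- the log identity
  have hlogp : ∀ l : ℕ, Real.log (p l) = -β * (l : ℝ) + Real.log (L (Real.exp (l : ℝ))) := by
    intro l
    have h1 : (1 : ℝ) ≤ Real.exp (l : ℝ) := by
      rw [← Real.exp_zero]; exact Real.exp_le_exp.mpr (Nat.cast_nonneg l)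
    have := hsurv (Real.exp (l : ℝ)) h1
    rw [← hp l] at this
    rw [this, Real.log_mul (by positivity) (hLpos _).ne', Real.log_rpow (Real.exp_pos _),
      Real.log_exp]
  have hbid : Real.log (p k) - Real.log (p (k + 1)) =
      β + Real.log (L (Real.exp (k : ℝ)) / L (Real.exp ((k + 1 : ℕ) : ℝ))) := by
    rw [hlogp k, hlogp (k + 1),
      Real.log_div (hLpos _).ne' (hLpos _).ne']
    push_cast
    ring
  -- the good event is contained in the target
  have hsub : (Bad k ∪ Bad (k + 1))ᶜ ⊆
      {ω | |(Real.log (phat k ω) - Real.log (phat (k + 1) ω)) - β|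
        ≤ 6 * Real.sqrt (u / p (k + 1))
          + |Real.log (L (Real.exp k) / L (Real.exp (k + 1)))|} := by
    intro ω hω
    rw [Set.mem_compl_iff, Set.mem_union] at hω
    push_neg at hω
    obtain ⟨hω1, hω2⟩ := hω
    simp only [hBad, Set.mem_setOf_eq, not_lt] at hω1 hω2
    have hphk : phat k ω = (1 / (n : ℝ)) * ∑ i ∈ Finset.range n, Y k i ω := hphat k ω
    have hphk1 : phat (k + 1) ω = (1 / (n : ℝ)) * ∑ i ∈ Finset.range n, Y (k + 1) i ω :=
      hphat (k + 1) ω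
    simp only [Set.mem_setOf_eq]
    rw [hphk, hphk1]
    have := det_part hu0 hcond hpmono hω1 hω2 hbid
    convert this using 4 <;> push_cast <;> ring
  -- measure computation
  calc ENNReal.ofReal (1 - 2 * δ)
      ≤ 1 - ENNReal.ofReal (2 * δ) := by
        apply ENNReal.le_sub_of_add_le_right ENNReal.ofReal_ne_top
        rw [← ENNReal.ofReal_add (by linarith) (by linarith)]
        rw [show (1 - 2 * δ) + 2 * δ = 1 by ring]
        simp
    _ ≤ 1 - μ (Bad k ∪ Bad (k + 1)) := by
        apply tsub_le_tsub_left
        calc μ (Bad k ∪ Bad (k + 1)) ≤ μ (Bad k) + μ (Bad (k + 1)) := measure_union_le _ _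
          _ ≤ ENNReal.ofReal δ + ENNReal.ofReal δ := add_le_add (hBadLe k hcondk)
              (hBadLe (k + 1) hcond)
          _ = ENNReal.ofReal (2 * δ) := by
              rw [← ENNReal.ofReal_add hδ0.le hδ0.le]; ring_nf
    _ = μ ((Bad k ∪ Bad (k + 1))ᶜ) := by
        rw [measure_compl ((hBadMeas k).union (hBadMeas (k + 1))) (measure_ne_top μ _)]
        simp
    _ ≤ _ := measure_mono hsub
end

section
/- Let S₁, S₂, … be i.i.d. with P(S > x) = x^{-β}L(x) for x ≥ 1, β > 0, L slowly varying. Suppose kₙ → ∞ and (ln n)·e^{kₙβ}/n = o(L(e^{kₙ})). Then the estimator β̂ₙ(kₙ) = ln p̂ₙ_{kₙ} − ln p̂ₙ_{kₙ+1}, with p̂ₙ_l = (1/n)∑_{i≤n}1{S_i > e^l} (set to 0 if p̂ₙ_{kₙ+1}=0), converges almost surely to β as n → ∞. -/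
open MeasureTheory ProbabilityTheory Filter Real

namespace Stmt6
variable {Ω : Type*} [MeasurableSpace Ω] {μ : Measure Ω}


lemma c_pos {ε : ℝ} (hε0 : 0 < ε) (hε1 : ε < 1) :
    0 < min ((1+ε) * Real.log (1+ε) - ε) (ε + (1-ε) * Real.log (1-ε)) := by
  have h1 : Real.log (1+ε) > ε / (1+ε) := by
    have := Real.log_lt_sub_one_of_pos (x := (1+ε)⁻¹) (by positivity)
      (by intro h; rw [inv_eq_one] at h; linarith)
    rw [Real.log_inv] at this
    have h2 : (1+ε)⁻¹ - 1 = -(ε/(1+ε)) := by field_simp; ring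
    rw [h2] at this; linarith
  have h2 : Real.log (1-ε) > -(ε / (1-ε)) := by
    have h0 : (0:ℝ) < 1 - ε := by linarith
    have := Real.log_lt_sub_one_of_pos (x := (1-ε)⁻¹) (by positivity)
      (by intro h; rw [inv_eq_one] at h; linarith)
    rw [Real.log_inv] at this
    have h2 : (1-ε)⁻¹ - 1 = ε/(1-ε) := by field_simp; ring
    rw [h2] at this; linarith
  have ha : 0 < (1+ε) * Real.log (1+ε) - ε := by
    have : (1+ε) * (ε/(1+ε)) = ε := by field_simp
    nlinarith [h1]
  have hb : 0 < ε + (1-ε) * Real.log (1-ε) := by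
    have h0 : (0:ℝ) < 1 - ε := by linarith
    have : (1-ε) * (ε/(1-ε)) = ε := by field_simp
    nlinarith [h2]
  exact lt_min ha hb




lemma chernoff [IsProbabilityMeasure μ]
    (n : ℕ) (Y : ℕ → Ω → ℝ) (hYm : ∀ i, Measurable (Y i))
    (h01 : ∀ i ω, Y i ω = 0 ∨ Y i ω = 1)
    (hind : iIndepFun Y μ)
    (p : ℝ) (hp : ∀ i, ∫ ω, Y i ω ∂μ = p)
    (ε : ℝ) (hε0 : 0 < ε) (hε1 : ε < 1) :
    (μ {ω | ε * (n * p) ≤ |(∑ i ∈ Finset.range n, Y i ω) - n * p|}).toReal ≤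
      2 * Real.exp (-(min ((1+ε) * Real.log (1+ε) - ε) (ε + (1-ε) * Real.log (1-ε)))
        * (n * p)) := by
  have hintY : ∀ i, Integrable (Y i) μ := fun i =>
    (integrable_const (1:ℝ)).mono' (hYm i).aestronglyMeasurable
      (Filter.Eventually.of_forall fun ω => by rcases h01 i ω with h | h <;> simp [h])
  have hp0 : 0 ≤ p := by
    rw [← hp 0]
    exact integral_nonneg fun ω => by rcases h01 0 ω with h | h <;> simp [h]
  have hp1 : p ≤ 1 := by
    rw [← hp 0]
    calc ∫ ω, Y 0 ω ∂μ ≤ ∫ _, (1:ℝ) ∂μ := by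
          refine integral_mono (hintY 0) (integrable_const 1) fun ω => ?_
          rcases h01 0 ω with h | h <;> simp [h]
      _ = 1 := by simp
  have hmgf : ∀ (i : ℕ) (t : ℝ), mgf (Y i) μ t = 1 + (Real.exp t - 1) * p := by
    intro i t
    have hfe : (fun ω => Real.exp (t * Y i ω)) = fun ω => 1 + (Real.exp t - 1) * Y i ω := by
      funext ω; rcases h01 i ω with h | h <;> simp [h]
    rw [mgf, hfe, integral_add (integrable_const 1) ((hintY i).const_mul _),
      integral_const_mul, hp i]
    simp
  have hSum : (∑ i ∈ Finset.range n, Y i) = fun ω => ∑ i ∈ Finset.range n, Y i ω := by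
    funext ω; exact Finset.sum_apply ω (Finset.range n) Y
  have hSm : Measurable (∑ i ∈ Finset.range n, Y i) := by
    rw [hSum]; exact Finset.measurable_sum _ fun i _ => hYm i
  have hSb : ∀ ω, 0 ≤ (∑ i ∈ Finset.range n, Y i) ω ∧ (∑ i ∈ Finset.range n, Y i) ω ≤ n := by
    intro ω
    rw [hSum]
    constructor
    · exact Finset.sum_nonneg fun i _ => by rcases h01 i ω with h | h <;> simp [h]
    · calc ∑ i ∈ Finset.range n, Y i ω ≤ ∑ _i ∈ Finset.range n, (1:ℝ) :=
            Finset.sum_le_sum fun i _ => by rcases h01 i ω with h | h <;> simp [h]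
        _ = n := by simp
  have hintE : ∀ t : ℝ, Integrable (fun ω => Real.exp (t * (∑ i ∈ Finset.range n, Y i) ω)) μ := by
    intro t
    refine (integrable_const (Real.exp (|t| * n))).mono'
      ((hSm.const_mul t).exp).aestronglyMeasurable (Filter.Eventually.of_forall fun ω => ?_)
    rw [Real.norm_eq_abs, abs_of_pos (Real.exp_pos _), Real.exp_le_exp]
    rcases le_or_gt t 0 with h | h
    · calc t * (∑ i ∈ Finset.range n, Y i) ω ≤ 0 :=
            mul_nonpos_of_nonpos_of_nonneg h (hSb ω).1
        _ ≤ |t| * n := by positivity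
    · calc t * (∑ i ∈ Finset.range n, Y i) ω ≤ t * n :=
            mul_le_mul_of_nonneg_left (hSb ω).2 h.le
        _ ≤ |t| * n := mul_le_mul_of_nonneg_right (le_abs_self t) (Nat.cast_nonneg n)
  have hmgfS : ∀ t : ℝ, mgf (∑ i ∈ Finset.range n, Y i) μ t = (1 + (Real.exp t - 1) * p) ^ n := by
    intro t
    rw [hind.mgf_sum hYm]
    simp [hmgf]
  set a := (1+ε) * Real.log (1+ε) - ε with ha_def
  set b := ε + (1-ε) * Real.log (1-ε) with hb_def
  have hnp : (0:ℝ) ≤ n * p := by positivity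
  have hup : (μ {ω | (1+ε) * (n*p) ≤ (∑ i ∈ Finset.range n, Y i) ω}).toReal ≤
      Real.exp (-(a * (n*p))) := by
    have t1 : (0:ℝ) ≤ Real.log (1+ε) := Real.log_nonneg (by linarith)
    have h := measure_ge_le_exp_mul_mgf (μ := μ) (X := ∑ i ∈ Finset.range n, Y i)
      ((1+ε) * (n*p)) t1 (hintE _)
    rw [hmgfS, Real.exp_log (by linarith : (0:ℝ) < 1+ε)] at h
    refine h.trans ?_
    have hb1 : (1 + (1+ε-1) * p) ^ n ≤ Real.exp (n * (ε * p)) := by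
      have h1 : 1 + (1+ε-1) * p = ε * p + 1 := by ring
      rw [h1, Real.exp_nat_mul]
      exact pow_le_pow_left₀ (by positivity) (Real.add_one_le_exp _) n
    calc Real.exp (-Real.log (1+ε) * ((1+ε) * (n*p))) * (1 + (1+ε-1) * p) ^ n
        ≤ Real.exp (-Real.log (1+ε) * ((1+ε) * (n*p))) * Real.exp (n * (ε * p)) :=
          mul_le_mul_of_nonneg_left hb1 (Real.exp_pos _).le
      _ = Real.exp (-(a * (n*p))) := by rw [← Real.exp_add]; congr 1; ring
  have hlow : (μ {ω | (∑ i ∈ Finset.range n, Y i) ω ≤ (1-ε) * (n*p)}).toReal ≤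
      Real.exp (-(b * (n*p))) := by
    have h1e : (0:ℝ) < 1 - ε := by linarith
    have t2 : Real.log (1-ε) ≤ 0 := Real.log_nonpos (by linarith) (by linarith)
    have h := measure_le_le_exp_mul_mgf (μ := μ) (X := ∑ i ∈ Finset.range n, Y i)
      ((1-ε) * (n*p)) t2 (hintE _)
    rw [hmgfS, Real.exp_log h1e] at h
    refine h.trans ?_
    have hb1 : (1 + (1-ε-1) * p) ^ n ≤ Real.exp (n * (-(ε * p))) := by
      have h1 : 1 + (1-ε-1) * p = -(ε*p) + 1 := by ring
      have h2 : (0:ℝ) ≤ -(ε*p) + 1 := by nlinarith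
      rw [h1, Real.exp_nat_mul]
      exact pow_le_pow_left₀ h2 (Real.add_one_le_exp _) n
    calc Real.exp (-Real.log (1-ε) * ((1-ε) * (n*p))) * (1 + (1-ε-1) * p) ^ n
        ≤ Real.exp (-Real.log (1-ε) * ((1-ε) * (n*p))) * Real.exp (n * (-(ε * p))) :=
          mul_le_mul_of_nonneg_left hb1 (Real.exp_pos _).le
      _ = Real.exp (-(b * (n*p))) := by rw [← Real.exp_add]; congr 1; ring
  have hsub : {ω | ε * (n * p) ≤ |(∑ i ∈ Finset.range n, Y i ω) - n * p|} ⊆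
      {ω | (1+ε) * (n*p) ≤ (∑ i ∈ Finset.range n, Y i) ω} ∪
      {ω | (∑ i ∈ Finset.range n, Y i) ω ≤ (1-ε) * (n*p)} := by
    intro ω hω
    simp only [Set.mem_setOf_eq] at hω
    rcases le_abs.mp hω with h | h
    · left
      simp only [Set.mem_setOf_eq, hSum]
      linarith
    · right
      simp only [Set.mem_setOf_eq, hSum]
      linarith
  have hfin : μ {ω | (1+ε) * (n*p) ≤ (∑ i ∈ Finset.range n, Y i) ω} ≠ ⊤ :=
    measure_ne_top μ _
  have hfin' : μ {ω | (∑ i ∈ Finset.range n, Y i) ω ≤ (1-ε) * (n*p)} ≠ ⊤ :=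
    measure_ne_top μ _
  have hμ : μ {ω | ε * (n * p) ≤ |(∑ i ∈ Finset.range n, Y i ω) - n * p|} ≤
      μ {ω | (1+ε) * (n*p) ≤ (∑ i ∈ Finset.range n, Y i) ω} +
      μ {ω | (∑ i ∈ Finset.range n, Y i) ω ≤ (1-ε) * (n*p)} :=
    (measure_mono hsub).trans (measure_union_le _ _)
  have := (ENNReal.toReal_mono (by finiteness) hμ)
  rw [ENNReal.toReal_add hfin hfin'] at this
  have hmin1 : Real.exp (-(a * (n*p))) ≤ Real.exp (-(min a b) * (n*p)) := by
    rw [Real.exp_le_exp]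
    have := mul_le_mul_of_nonneg_right (min_le_left a b) hnp
    linarith
  have hmin2 : Real.exp (-(b * (n*p))) ≤ Real.exp (-(min a b) * (n*p)) := by
    rw [Real.exp_le_exp]
    have := mul_le_mul_of_nonneg_right (min_le_right a b) hnp
    linarith
  linarith [hup.trans hmin1, hlow.trans hmin2]




lemma bc [IsProbabilityMeasure μ] (s : ℕ → Set Ω) (f : ℕ → ℝ)
    (hf0 : ∀ n, 0 ≤ f n) (hf : Summable f)
    (hb : ∀ᶠ n in atTop, (μ (s n)).toReal ≤ f n) :
    ∀ᵐ ω ∂μ, ∀ᶠ n in atTop, ω ∉ s n := by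
  obtain ⟨N, hN⟩ := eventually_atTop.1 hb
  set g : ℕ → ℝ := fun n => if n < N then 1 else f n with hg_def
  have hg0 : ∀ n, 0 ≤ g n := by
    intro n; by_cases h : n < N <;> simp [hg_def, h, hf0 n]
  have hgs : Summable g := by
    have : g = f + fun n => if n < N then 1 - f n else 0 := by
      funext n; by_cases h : n < N <;> simp [hg_def, h]
    rw [this]
    refine hf.add (summable_of_ne_finset_zero (s := Finset.range N) fun n hn => ?_)
    simp only [Finset.mem_range] at hn
    simp [hn]
  refine MeasureTheory.ae_eventually_notMem ?_
  have hle : ∀ n, μ (s n) ≤ ENNReal.ofReal (g n) := by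
    intro n
    by_cases h : n < N
    · simpa [hg_def, h] using prob_le_one (μ := μ) (s := s n)
    · rw [← ENNReal.ofReal_toReal (measure_ne_top μ (s n))]
      exact ENNReal.ofReal_le_ofReal (by simpa [hg_def, h] using hN n (not_lt.1 h))
  have hcalc : ∑' n, μ (s n) ≤ ENNReal.ofReal (∑' n, g n) := by
    calc ∑' n, μ (s n) ≤ ∑' n, ENNReal.ofReal (g n) := ENNReal.tsum_le_tsum hle
      _ = ENNReal.ofReal (∑' n, g n) := (ENNReal.ofReal_tsum_of_nonneg hg0 hgs).symm
  exact ne_top_of_le_ne_top ENNReal.ofReal_ne_top hcalc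

lemma key [IsProbabilityMeasure μ]
    (S : ℕ → Ω → ℝ) (hmeas : ∀ i, Measurable (S i))
    (hindep : iIndepFun S μ)
    (hident : ∀ i, IdentDistrib (S i) (S 0) μ μ)
    (β : ℝ) (hβ : 0 < β) (L : ℝ → ℝ) (hLpos : ∀ x : ℝ, 0 < L x)
    (hsurv : ∀ x : ℝ, 1 ≤ x → (μ {ω | S 0 ω > x}).toReal = x ^ (-β) * L x)
    (κ : ℕ → ℝ) (hκ : Tendsto κ atTop atTop)
    (hsm : Tendsto (fun n : ℕ => (Real.log n * Real.exp (κ n * β) / n) / L (Real.exp (κ n)))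
      atTop (nhds 0)) :
    ∀ᵐ ω ∂μ, Tendsto (fun n : ℕ =>
      ((1 / n : ℝ) * ∑ i ∈ Finset.range n, (if S i ω > Real.exp (κ n) then (1:ℝ) else 0)) /
        (μ {ω' | S 0 ω' > Real.exp (κ n)}).toReal) atTop (nhds 1) := by
  set p : ℕ → ℝ := fun n => (μ {ω' | S 0 ω' > Real.exp (κ n)}).toReal with hp_def
  have hp0 : ∀ n, 0 ≤ p n := fun n => ENNReal.toReal_nonneg
  have hκ0 : ∀ᶠ n in atTop, 0 ≤ κ n := hκ.eventually_ge_atTop 0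
  have hrpow : ∀ n, Real.exp (κ n) ^ (-β) = (Real.exp (κ n * β))⁻¹ := by
    intro n
    rw [Real.rpow_def_of_pos (Real.exp_pos _), Real.log_exp, ← Real.exp_neg]
    ring_nf
  have hpe : ∀ n, 0 ≤ κ n → p n = (Real.exp (κ n * β))⁻¹ * L (Real.exp (κ n)) := by
    intro n hn
    rw [hp_def]
    simp only
    rw [hsurv _ (Real.one_le_exp hn), hrpow]
  have hppos : ∀ n, 0 ≤ κ n → 0 < p n := by
    intro n hn
    rw [hpe n hn]
    exact mul_pos (by positivity) (hLpos _)
  -- the mean of the indicator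
  have hmean : ∀ (n i : ℕ),
      ∫ ω, (if S i ω > Real.exp (κ n) then (1:ℝ) else 0) ∂μ = p n := by
    intro n i
    have hfi : (fun ω => if S i ω > Real.exp (κ n) then (1:ℝ) else 0) =
        Set.indicator ((S i) ⁻¹' (Set.Ioi (Real.exp (κ n)))) (1 : Ω → ℝ) := by
      funext ω
      by_cases h : S i ω > Real.exp (κ n) <;>
        simp [Set.indicator_apply, Set.mem_Ioi, h]
    rw [hfi, integral_indicator_one ((hmeas i) measurableSet_Ioi)]
    have hmap : μ ((S i) ⁻¹' (Set.Ioi (Real.exp (κ n)))) =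
        μ ((S 0) ⁻¹' (Set.Ioi (Real.exp (κ n)))) := by
      rw [← Measure.map_apply (hmeas i) measurableSet_Ioi,
        ← Measure.map_apply (hmeas 0) measurableSet_Ioi, (hident i).map_eq]
    rw [measureReal_def, hmap, hp_def]
    rfl
  -- measurability and independence of indicators
  have hYm : ∀ (n i : ℕ), Measurable (fun ω => if S i ω > Real.exp (κ n) then (1:ℝ) else 0) := by
    intro n i
    exact (Measurable.ite measurableSet_Ioi measurable_const measurable_const).comp (hmeas i)
  have hYind : ∀ n : ℕ, iIndepFun
      (fun i (ω : Ω) => if S i ω > Real.exp (κ n) then (1:ℝ) else 0) μ := by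
    intro n
    exact hindep.comp (fun _ x => if x > Real.exp (κ n) then (1:ℝ) else 0)
      (fun _ => Measurable.ite measurableSet_Ioi measurable_const measurable_const)
  -- the bad events
  set E : ℕ → ℕ → Set Ω := fun m n =>
    {ω | (1/(m+2) : ℝ) * (n * p n) ≤
      |(∑ i ∈ Finset.range n, if S i ω > Real.exp (κ n) then (1:ℝ) else 0) - n * p n|}
    with hE_def
  have hεm0 : ∀ m : ℕ, (0:ℝ) < 1/(m+2) := by intro m; positivity
  have hεm1 : ∀ m : ℕ, (1/(m+2) : ℝ) < 1 := by
    intro m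
    rw [div_lt_one (by positivity)]
    linarith [Nat.cast_nonneg (α := ℝ) m]
  have hch : ∀ m n, (μ (E m n)).toReal ≤
      2 * Real.exp (-(min ((1+(1/(m+2):ℝ)) * Real.log (1+(1/(m+2):ℝ)) - (1/(m+2):ℝ))
        ((1/(m+2):ℝ) + (1-(1/(m+2):ℝ)) * Real.log (1-(1/(m+2):ℝ)))) * (n * p n)) := by
    intro m n
    exact chernoff n _ (hYm n) (fun i ω => by by_cases h : S i ω > Real.exp (κ n) <;> simp [h])
      (hYind n) (p n) (hmean n) _ (hεm0 m) (hεm1 m)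
  -- eventual bound by 2/n^2
  have hbound : ∀ m : ℕ, ∀ᶠ n in atTop, (μ (E m n)).toReal ≤ 2 / (n:ℝ)^2 := by
    intro m
    set c := min ((1+(1/(m+2):ℝ)) * Real.log (1+(1/(m+2):ℝ)) - (1/(m+2):ℝ))
        ((1/(m+2):ℝ) + (1-(1/(m+2):ℝ)) * Real.log (1-(1/(m+2):ℝ))) with hc_def
    have hc : 0 < c := c_pos (hεm0 m) (hεm1 m)
    have hsm2 : ∀ᶠ n : ℕ in atTop,
        (Real.log n * Real.exp (κ n * β) / n) / L (Real.exp (κ n)) < c/2 :=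
      hsm.eventually (eventually_lt_nhds (by positivity))
    filter_upwards [hsm2, hκ0, eventually_ge_atTop 1] with n hg hκn hn1
    have hn0 : (0:ℝ) < n := by exact_mod_cast hn1
    have hlogid : Real.log n =
        ((Real.log n * Real.exp (κ n * β) / n) / L (Real.exp (κ n))) * (n * p n) := by
      rw [hpe n hκn]
      field_simp [(hLpos (Real.exp (κ n))).ne', Real.exp_ne_zero, hn0.ne']
    have hlog : 2 * Real.log n ≤ c * (n * p n) := by
      rw [hlogid]
      have hnp : 0 ≤ (n:ℝ) * p n := by positivity
      nlinarith [mul_le_mul_of_nonneg_right hg.le hnp]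
    refine (hch m n).trans ?_
    have hexp : Real.exp (-c * (n * p n)) ≤ 1 / (n:ℝ)^2 := by
      have h1 : Real.exp (-c * (n * p n)) ≤ Real.exp (-(2 * Real.log n)) := by
        rw [Real.exp_le_exp]; linarith
      refine h1.trans_eq ?_
      rw [Real.exp_neg]
      rw [show (2:ℝ) * Real.log n = ((2:ℕ):ℝ) * Real.log n by norm_num]
      rw [Real.exp_nat_mul, Real.exp_log hn0]
      rw [one_div]
    calc 2 * Real.exp (-c * (n * p n)) ≤ 2 * (1/(n:ℝ)^2) := by linarith
      _ = 2 / (n:ℝ)^2 := by ring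
  -- Borel–Cantelli for each m
  have hBC : ∀ᵐ ω ∂μ, ∀ m : ℕ, ∀ᶠ n in atTop, ω ∉ E m n := by
    rw [ae_all_iff]
    intro m
    refine bc _ (fun n => 2/(n:ℝ)^2) (fun n => by positivity) ?_ (hbound m)
    have : Summable (fun n : ℕ => 2 * (1/(n:ℝ)^2)) :=
      ((summable_one_div_nat_pow (p := 2)).2 one_lt_two).mul_left 2
    refine this.congr fun n => by ring
  filter_upwards [hBC] with ω hω
  rw [Metric.tendsto_atTop]
  intro δ hδ
  obtain ⟨m, hm⟩ := exists_nat_one_div_lt hδ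
  have hεδ : (1/(m+2) : ℝ) < δ := by
    refine lt_of_le_of_lt ?_ hm
    apply one_div_le_one_div_of_le
    · positivity
    · linarith
  have hev : ∀ᶠ n in atTop, ω ∉ E m n ∧ 0 ≤ κ n ∧ 1 ≤ n :=
    ((hω m).and (hκ0.and (eventually_ge_atTop 1))).mono fun n h => ⟨h.1, h.2.1, h.2.2⟩
  obtain ⟨N, hN⟩ := eventually_atTop.1 hev
  refine ⟨N, fun n hn => ?_⟩
  obtain ⟨hnotE, hκn, hn1⟩ := hN n hn
  have hn0 : (0:ℝ) < n := by exact_mod_cast hn1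
  have hpn : 0 < p n := hppos n hκn
  have hnotE' : ¬ ((1/(m+2):ℝ) * (n * p n) ≤
      |(∑ i ∈ Finset.range n, if S i ω > Real.exp (κ n) then (1:ℝ) else 0) - n * p n|) :=
    hnotE
  have habs := not_le.1 hnotE'
  set Sn : ℝ := ∑ i ∈ Finset.range n, (if S i ω > Real.exp (κ n) then (1:ℝ) else 0)
    with hSn_def
  show dist ((1 / (n:ℝ)) * Sn / p n) 1 < δ
  have hid : (1/(n:ℝ)) * Sn / p n - 1 = (Sn - n * p n) / (n * p n) := by
    field_simp
  rw [Real.dist_eq, hid, abs_div, abs_of_pos (by positivity : (0:ℝ) < (n:ℝ) * p n)]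
  rw [div_lt_iff₀ (by positivity : (0:ℝ) < (n:ℝ) * p n)]
  calc |Sn - n * p n| < (1/(m+2):ℝ) * (n * p n) := habs
    _ ≤ δ * ((n:ℝ) * p n) := by
        exact mul_le_mul_of_nonneg_right hεδ.le (by positivity)


end Stmt6

/-- Strong consistency: if `kₙ → ∞` and `(ln n) e^{kₙ β} / n = o(L(e^{kₙ}))`, then
the estimator `β̂ₙ(kₙ)` (set to `0` when the empirical tail at level `kₙ+1` vanishes)
converges almost surely to `β`. -/
theorem stmt_6 {Ω : Type*} [MeasurableSpace Ω] (μ : Measure Ω) [IsProbabilityMeasure μ]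
    (S : ℕ → Ω → ℝ) (hmeas : ∀ i, Measurable (S i))
    (hindep : iIndepFun S μ)
    (hident : ∀ i, IdentDistrib (S i) (S 0) μ μ)
    (β : ℝ) (hβ : 0 < β) (L : ℝ → ℝ) (hLpos : ∀ x : ℝ, 0 < L x)
    (hL : ∀ l : ℝ, 0 < l →
      Tendsto (fun x : ℝ => L (l * x) / L x) atTop (nhds 1))
    (hsurv : ∀ x : ℝ, 1 ≤ x → (μ {ω | S 0 ω > x}).toReal = x ^ (-β) * L x)
    (k : ℕ → ℝ) (hk : Tendsto k atTop atTop)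
    (hsmall : Tendsto
      (fun n : ℕ => (Real.log n * Real.exp (k n * β) / n) / L (Real.exp (k n)))
      atTop (nhds 0))
    (phat : ℕ → ℝ → Ω → ℝ)
    (hphat : ∀ (n : ℕ) (l : ℝ) (ω : Ω), phat n l ω =
      (1 / n : ℝ) * ∑ i ∈ Finset.range n, (if S i ω > Real.exp l then (1 : ℝ) else 0))
    (betahat : ℕ → Ω → ℝ)
    (hbetahat : ∀ (n : ℕ) (ω : Ω), betahat n ω =
      if phat n (k n + 1) ω = 0 then 0
      else Real.log (phat n (k n) ω) - Real.log (phat n (k n + 1) ω)) :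
    ∀ᵐ ω ∂μ, Tendsto (fun n : ℕ => betahat n ω) atTop (nhds β) := by
  -- ratio of L values along the sequence
  have hLratio : Tendsto (fun n : ℕ => L (Real.exp 1 * Real.exp (k n)) / L (Real.exp (k n)))
      atTop (nhds 1) :=
    (hL (Real.exp 1) (Real.exp_pos 1)).comp (Real.tendsto_exp_atTop.comp hk)
  have hLratio' : Tendsto (fun n : ℕ => L (Real.exp (k n)) / L (Real.exp 1 * Real.exp (k n)))
      atTop (nhds 1) := by
    have h := hLratio.inv₀ one_ne_zero
    simp only [inv_div, inv_one] at h
    exact h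
  -- second-level smallness
  have hκ' : Tendsto (fun n : ℕ => k n + 1) atTop atTop :=
    tendsto_atTop_add_const_right _ 1 hk
  have hexp1 : ∀ n : ℕ, Real.exp (k n + 1) = Real.exp 1 * Real.exp (k n) := by
    intro n; rw [← Real.exp_add]; ring_nf
  have hsmall' : Tendsto
      (fun n : ℕ => (Real.log n * Real.exp ((k n + 1) * β) / n) / L (Real.exp (k n + 1)))
      atTop (nhds 0) := by
    have hid : ∀ n : ℕ,
        (Real.log n * Real.exp ((k n + 1) * β) / n) / L (Real.exp (k n + 1)) =
        ((Real.log n * Real.exp (k n * β) / n) / L (Real.exp (k n))) *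
          (Real.exp β * (L (Real.exp (k n)) / L (Real.exp 1 * Real.exp (k n)))) := by
      intro n
      rw [hexp1 n, show Real.exp ((k n + 1) * β) = Real.exp (k n * β) * Real.exp β by
        rw [← Real.exp_add]; ring_nf]
      rcases eq_or_ne (n:ℝ) 0 with h | h
      · simp [h]
      · field_simp [h, (hLpos (Real.exp (k n))).ne', (hLpos (Real.exp 1 * Real.exp (k n))).ne']
    have h2 : Tendsto (fun n : ℕ =>
        Real.exp β * (L (Real.exp (k n)) / L (Real.exp 1 * Real.exp (k n))))
        atTop (nhds (Real.exp β * 1)) := tendsto_const_nhds.mul hLratio'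
    have h3 := hsmall.mul h2
    rw [zero_mul] at h3
    exact h3.congr fun n => (hid n).symm
  have H1 := Stmt6.key S hmeas hindep hident β hβ L hLpos hsurv k hk hsmall
  have H2 := Stmt6.key S hmeas hindep hident β hβ L hLpos hsurv _ hκ' hsmall'
  -- the deterministic part
  have hk0 : ∀ᶠ n : ℕ in atTop, 0 ≤ k n := hk.eventually_ge_atTop 0
  have hq_eq : ∀ n : ℕ, 0 ≤ k n → (μ {ω' | S 0 ω' > Real.exp (k n)}).toReal =
      Real.exp (k n) ^ (-β) * L (Real.exp (k n)) := fun n hn =>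
    hsurv _ (Real.one_le_exp hn)
  have hq'_eq : ∀ n : ℕ, 0 ≤ k n → (μ {ω' | S 0 ω' > Real.exp (k n + 1)}).toReal =
      Real.exp (k n + 1) ^ (-β) * L (Real.exp (k n + 1)) := fun n hn =>
    hsurv _ (Real.one_le_exp (by linarith))
  have hqpos : ∀ᶠ n : ℕ in atTop, 0 < (μ {ω' | S 0 ω' > Real.exp (k n)}).toReal := by
    filter_upwards [hk0] with n hn
    rw [hq_eq n hn]
    exact mul_pos (Real.rpow_pos_of_pos (Real.exp_pos _) _) (hLpos _)
  have hq'pos : ∀ᶠ n : ℕ in atTop, 0 < (μ {ω' | S 0 ω' > Real.exp (k n + 1)}).toReal := by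
    filter_upwards [hk0] with n hn
    rw [hq'_eq n hn]
    exact mul_pos (Real.rpow_pos_of_pos (Real.exp_pos _) _) (hLpos _)
  have hlog0 : Tendsto (fun n : ℕ =>
      Real.log (L (Real.exp 1 * Real.exp (k n)) / L (Real.exp (k n)))) atTop (nhds 0) := by
    have h := ((Real.continuousAt_log one_ne_zero).tendsto).comp hLratio
    simpa [Function.comp_def] using h
  have hC : Tendsto (fun n : ℕ => Real.log ((μ {ω' | S 0 ω' > Real.exp (k n)}).toReal) -
      Real.log ((μ {ω' | S 0 ω' > Real.exp (k n + 1)}).toReal)) atTop (nhds β) := by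
    have hid : ∀ᶠ n : ℕ in atTop,
        β - Real.log (L (Real.exp 1 * Real.exp (k n)) / L (Real.exp (k n))) =
        Real.log ((μ {ω' | S 0 ω' > Real.exp (k n)}).toReal) -
          Real.log ((μ {ω' | S 0 ω' > Real.exp (k n + 1)}).toReal) := by
      filter_upwards [hk0] with n hn
      rw [hq_eq n hn, hq'_eq n hn,
        Real.log_mul (Real.rpow_pos_of_pos (Real.exp_pos _) _).ne' (hLpos _).ne',
        Real.log_mul (Real.rpow_pos_of_pos (Real.exp_pos _) _).ne' (hLpos _).ne',
        Real.log_rpow (Real.exp_pos _), Real.log_rpow (Real.exp_pos _),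
        Real.log_exp, Real.log_exp, hexp1 n,
        Real.log_div (hLpos _).ne' (hLpos _).ne']
      ring
    have h := (tendsto_const_nhds (x := β)).sub hlog0
    rw [sub_zero] at h
    exact h.congr' hid
  -- almost sure part
  filter_upwards [H1, H2] with ω h1 h2
  have hR : Tendsto (fun n : ℕ => phat n (k n) ω /
      (μ {ω' | S 0 ω' > Real.exp (k n)}).toReal) atTop (nhds 1) :=
    h1.congr fun n => by rw [hphat]
  have hR' : Tendsto (fun n : ℕ => phat n (k n + 1) ω /
      (μ {ω' | S 0 ω' > Real.exp (k n + 1)}).toReal) atTop (nhds 1) :=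
    h2.congr fun n => by rw [hphat]
  have hRpos : ∀ᶠ n : ℕ in atTop, 0 < phat n (k n) ω /
      (μ {ω' | S 0 ω' > Real.exp (k n)}).toReal :=
    hR.eventually (eventually_gt_nhds one_pos)
  have hR'pos : ∀ᶠ n : ℕ in atTop, 0 < phat n (k n + 1) ω /
      (μ {ω' | S 0 ω' > Real.exp (k n + 1)}).toReal :=
    hR'.eventually (eventually_gt_nhds one_pos)
  have hlogR : Tendsto (fun n : ℕ => Real.log (phat n (k n) ω /
      (μ {ω' | S 0 ω' > Real.exp (k n)}).toReal)) atTop (nhds 0) := by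
    have h := ((Real.continuousAt_log one_ne_zero).tendsto).comp hR
    simpa [Function.comp_def] using h
  have hlogR' : Tendsto (fun n : ℕ => Real.log (phat n (k n + 1) ω /
      (μ {ω' | S 0 ω' > Real.exp (k n + 1)}).toReal)) atTop (nhds 0) := by
    have h := ((Real.continuousAt_log one_ne_zero).tendsto).comp hR'
    simpa [Function.comp_def] using h
  have hev : ∀ᶠ n : ℕ in atTop,
      Real.log (phat n (k n) ω / (μ {ω' | S 0 ω' > Real.exp (k n)}).toReal) -
      Real.log (phat n (k n + 1) ω / (μ {ω' | S 0 ω' > Real.exp (k n + 1)}).toReal) +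
      (Real.log ((μ {ω' | S 0 ω' > Real.exp (k n)}).toReal) -
        Real.log ((μ {ω' | S 0 ω' > Real.exp (k n + 1)}).toReal)) = betahat n ω := by
    filter_upwards [hqpos, hq'pos, hRpos, hR'pos] with n hq hq' hRp hR'p
    have hphp : 0 < phat n (k n) ω := by
      have := mul_pos hRp hq
      rwa [div_mul_cancel₀ _ hq.ne'] at this
    have hphp2 : 0 < phat n (k n + 1) ω := by
      have := mul_pos hR'p hq'
      rwa [div_mul_cancel₀ _ hq'.ne'] at this
    rw [hbetahat n ω, if_neg hphp2.ne']
    rw [Real.log_div hphp.ne' hq.ne', Real.log_div hphp2.ne' hq'.ne']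
    ring
  have hcomb : Tendsto (fun n : ℕ =>
      Real.log (phat n (k n) ω / (μ {ω' | S 0 ω' > Real.exp (k n)}).toReal) -
      Real.log (phat n (k n + 1) ω / (μ {ω' | S 0 ω' > Real.exp (k n + 1)}).toReal) +
      (Real.log ((μ {ω' | S 0 ω' > Real.exp (k n)}).toReal) -
        Real.log ((μ {ω' | S 0 ω' > Real.exp (k n + 1)}).toReal))) atTop (nhds β) := by
    have h := (hlogR.sub hlogR').add hC
    simpa using h
  exact hcomb.congr' hev
end

section
/- Let φ(λₙ, Zₙ¹, Zₙ²) = (λₙ + Zₙ¹ yₙ)/(1 + Zₙ² yₙ). Suppose λₙ → e^β, yₙ → 0, yₙ·√(n vₙ) → e^β for positive sequences yₙ, vₙ with n vₙ → ∞, and (Zₙ¹, Zₙ²) converges in distribution to a centered bivariate Gaussian with covariance matrix σ₁₁ = 1, σ₁₂ = σ₂₂ = e^{−β}. Then √(n vₙ)·(φ(λₙ, Zₙ¹, Zₙ²) − λₙ) converges in distribution to a centered normal with variance e^{2β}(e^β − 1). -/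
open MeasureTheory ProbabilityTheory Filter Real BoundedContinuousFunction

open Topology

noncomputable def cutoff (R : ℝ) : BoundedContinuousFunction (ℝ × ℝ) ℝ :=
  BoundedContinuousFunction.mkOfBound
    ⟨fun z => max 0 (min 1 (R - ‖z‖)), by fun_prop⟩ 1 (by
      intro x y
      have h1 : ∀ w : ℝ × ℝ, (0:ℝ) ≤ max 0 (min 1 (R - ‖w‖)) := fun w => le_max_left _ _
      have h2 : ∀ w : ℝ × ℝ, max 0 (min 1 (R - ‖w‖)) ≤ 1 := fun w =>
        max_le zero_le_one (min_le_left _ _)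
      simp only [ContinuousMap.coe_mk, Real.dist_eq, abs_sub_le_iff]
      constructor <;> linarith [h1 x, h2 x, h1 y, h2 y])

lemma cutoff_apply (R : ℝ) (z : ℝ × ℝ) : cutoff R z = max 0 (min 1 (R - ‖z‖)) := rfl

lemma cutoff_nonneg (R : ℝ) (z : ℝ × ℝ) : 0 ≤ cutoff R z := le_max_left _ _

lemma cutoff_le_one (R : ℝ) (z : ℝ × ℝ) : cutoff R z ≤ 1 :=
  max_le zero_le_one (min_le_left _ _)

lemma cutoff_eq_zero {R : ℝ} {z : ℝ × ℝ} (h : R ≤ ‖z‖) : cutoff R z = 0 := by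
  rw [cutoff_apply]
  exact max_eq_left (le_trans (min_le_right _ _) (by linarith))

lemma cutoff_eq_one {R : ℝ} {z : ℝ × ℝ} (h : ‖z‖ ≤ R - 1) : cutoff R z = 1 := by
  rw [cutoff_apply, min_eq_left (by linarith)]
  exact max_eq_right zero_le_one

lemma integrable_of_bound {Ω : Type*} [MeasurableSpace Ω] (μ : Measure Ω) [IsFiniteMeasure μ]
    (h : Ω → ℝ) (C : ℝ) (hm : Measurable h) (hb : ∀ ω, |h ω| ≤ C) : Integrable h μ :=
  (integrable_const C).mono' hm.aestronglyMeasurable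
    (ae_of_all _ (by simpa [Real.norm_eq_abs] using hb))

lemma lin_est {E R δ₁ lamn yn s z1 z2 : ℝ}
    (hE : 0 < E) (hR : 0 < R) (hδ₁ : 0 ≤ δ₁)
    (hyn : 0 < yn)
    (h1 : |yn * s - E| ≤ δ₁) (h2 : |yn * s * lamn - E ^ 2| ≤ δ₁)
    (h3a : yn ≤ δ₁) (h3b : yn ≤ 1 / (2 * R))
    (hz1 : |z1| ≤ R) (hz2 : |z2| ≤ R) :
    |s * ((lamn + z1 * yn) / (1 + z2 * yn) - lamn) - (E * z1 - E ^ 2 * z2)|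
      ≤ (δ₁ * R + δ₁ * R + (E * R + E ^ 2 * R) * R * δ₁) * 2 := by
  have hgz : |E * z1 - E ^ 2 * z2| ≤ E * R + E ^ 2 * R := by
    have hE2 : (0:ℝ) < E ^ 2 := by positivity
    calc |E * z1 - E ^ 2 * z2| ≤ |E * z1| + |E ^ 2 * z2| := abs_sub _ _
      _ = E * |z1| + E ^ 2 * |z2| := by rw [abs_mul, abs_mul, abs_of_pos hE, abs_of_pos hE2]
      _ ≤ E * R + E ^ 2 * R := by nlinarith [abs_nonneg z1, abs_nonneg z2]
  have hd : (1:ℝ)/2 ≤ 1 + z2 * yn := by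
    have habs : |z2 * yn| ≤ 1 / 2 := by
      rw [abs_mul, abs_of_pos hyn]
      calc |z2| * yn ≤ R * (1 / (2 * R)) :=
            mul_le_mul hz2 h3b (le_of_lt hyn) (le_of_lt hR)
        _ = 1 / 2 := by field_simp
    linarith [(abs_le.mp habs).1]
  have hdpos : (0:ℝ) < 1 + z2 * yn := by linarith
  have hdne : (1 + z2 * yn) ≠ 0 := ne_of_gt hdpos
  have hdiff : s * ((lamn + z1 * yn) / (1 + z2 * yn) - lamn) - (E * z1 - E ^ 2 * z2)
      = ((yn * s - E) * z1 - (yn * s * lamn - E ^ 2) * z2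
          - (E * z1 - E ^ 2 * z2) * z2 * yn) / (1 + z2 * yn) := by
    rw [eq_div_iff hdne]
    have hq : (lamn + z1 * yn) / (1 + z2 * yn) * (1 + z2 * yn) = lamn + z1 * yn :=
      div_mul_cancel₀ _ hdne
    linear_combination s * hq
  rw [hdiff, abs_div, abs_of_pos hdpos]
  have hnum : |(yn * s - E) * z1 - (yn * s * lamn - E ^ 2) * z2
        - (E * z1 - E ^ 2 * z2) * z2 * yn|
      ≤ δ₁ * R + δ₁ * R + (E * R + E ^ 2 * R) * R * δ₁ := by
    have t1 : |(yn * s - E) * z1| ≤ δ₁ * R := by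
      rw [abs_mul]; exact mul_le_mul h1 hz1 (abs_nonneg _) hδ₁
    have t2 : |(yn * s * lamn - E ^ 2) * z2| ≤ δ₁ * R := by
      rw [abs_mul]; exact mul_le_mul h2 hz2 (abs_nonneg _) hδ₁
    have t3 : |(E * z1 - E ^ 2 * z2) * z2 * yn| ≤ (E * R + E ^ 2 * R) * R * δ₁ := by
      rw [abs_mul, abs_mul, abs_of_pos hyn]
      have hERnn : (0:ℝ) ≤ E * R + E ^ 2 * R := by positivity
      have hp : |E * z1 - E ^ 2 * z2| * |z2| ≤ (E * R + E ^ 2 * R) * R :=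
        mul_le_mul hgz hz2 (abs_nonneg z2) hERnn
      calc |E * z1 - E ^ 2 * z2| * |z2| * yn
          ≤ (E * R + E ^ 2 * R) * R * yn :=
            mul_le_mul_of_nonneg_right hp (le_of_lt hyn)
        _ ≤ (E * R + E ^ 2 * R) * R * δ₁ :=
            mul_le_mul_of_nonneg_left h3a (by positivity)
    calc |(yn * s - E) * z1 - (yn * s * lamn - E ^ 2) * z2
          - (E * z1 - E ^ 2 * z2) * z2 * yn|
        ≤ |(yn * s - E) * z1 - (yn * s * lamn - E ^ 2) * z2|
          + |(E * z1 - E ^ 2 * z2) * z2 * yn| := abs_sub _ _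
      _ ≤ |(yn * s - E) * z1| + |(yn * s * lamn - E ^ 2) * z2|
          + |(E * z1 - E ^ 2 * z2) * z2 * yn| := by
          linarith [abs_sub ((yn * s - E) * z1) ((yn * s * lamn - E ^ 2) * z2)]
      _ ≤ δ₁ * R + δ₁ * R + (E * R + E ^ 2 * R) * R * δ₁ := by linarith
  calc |(yn * s - E) * z1 - (yn * s * lamn - E ^ 2) * z2
        - (E * z1 - E ^ 2 * z2) * z2 * yn| / (1 + z2 * yn)
      ≤ (δ₁ * R + δ₁ * R + (E * R + E ^ 2 * R) * R * δ₁) / (1/2) := by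
        apply div_le_div₀ (by positivity) hnum (by norm_num) hd
    _ = (δ₁ * R + δ₁ * R + (E * R + E ^ 2 * R) * R * δ₁) * 2 := by ring


set_option maxHeartbeats 2000000 in
/-- Delta-method/linearization step: if `λₙ → e^β`, `yₙ → 0`, `yₙ √(n vₙ) → e^β`,
`n vₙ → ∞`, and `(Zₙ¹, Zₙ²)` converges in distribution to a centered bivariate Gaussian
`(G₁,G₂)` with covariances `σ₁₁ = 1`, `σ₁₂ = σ₂₂ = e^{-β}`, then
`√(n vₙ)((λₙ + Zₙ¹ yₙ)/(1 + Zₙ² yₙ) - λₙ)` converges in distribution to a centered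
normal with variance `e^{2β}(e^β - 1)`. -/
theorem stmt_18 {Ω Ω' : Type*} [MeasurableSpace Ω] [MeasurableSpace Ω']
    (μ : Measure Ω) [IsProbabilityMeasure μ] (ν : Measure Ω') [IsProbabilityMeasure ν]
    (β : ℝ) (hβ : 0 < β)
    (lam y v : ℕ → ℝ) (hy : ∀ n, 0 < y n) (hv : ∀ n, 0 < v n)
    (hlam : Tendsto lam atTop (nhds (Real.exp β)))
    (hy0 : Tendsto y atTop (nhds 0))
    (hyv : Tendsto (fun n : ℕ => y n * Real.sqrt (n * v n)) atTop (nhds (Real.exp β)))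
    (hnv : Tendsto (fun n : ℕ => (n : ℝ) * v n) atTop atTop)
    (Z1 Z2 : ℕ → Ω → ℝ) (hZmeas : ∀ n, Measurable (Z1 n) ∧ Measurable (Z2 n))
    (G1 G2 : Ω' → ℝ) (hGmeas : Measurable G1 ∧ Measurable G2)
    (hGauss : ∀ a b : ℝ,
      ν.map (fun ω' => a * G1 ω' + b * G2 ω') =
        gaussianReal 0 (Real.toNNReal
          (a ^ 2 * 1 + 2 * a * b * Real.exp (-β) + b ^ 2 * Real.exp (-β))))
    (hconv : ∀ f : BoundedContinuousFunction (ℝ × ℝ) ℝ,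
      Tendsto (fun n : ℕ => ∫ ω, f (Z1 n ω, Z2 n ω) ∂μ) atTop
        (nhds (∫ ω', f (G1 ω', G2 ω') ∂ν))) :
    ∀ f : BoundedContinuousFunction ℝ ℝ,
      Tendsto (fun n : ℕ => ∫ ω,
          f (Real.sqrt (n * v n) *
            ((lam n + Z1 n ω * y n) / (1 + Z2 n ω * y n) - lam n)) ∂μ) atTop
        (nhds (∫ x, f x ∂(gaussianReal 0
          (Real.toNNReal (Real.exp (2 * β) * (Real.exp β - 1)))))) := by
  intro f
  have hE : 0 < Real.exp β := Real.exp_pos β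
  set E : ℝ := Real.exp β with hEdef
  have hgc : Continuous (fun p : ℝ × ℝ => E * p.1 - E ^ 2 * p.2) := by fun_prop
  set g : ℝ × ℝ → ℝ := fun p => E * p.1 - E ^ 2 * p.2 with hgdef
  clear_value g
  set L : ℝ := ∫ ω', f (g (G1 ω', G2 ω')) ∂ν with hLdef
  -- Step A: identify the gaussian integral with L
  have hstepA : (∫ x, f x ∂(gaussianReal 0
      (Real.toNNReal (Real.exp (2 * β) * (Real.exp β - 1))))) = L := by
    have hvar : Real.exp (2 * β) * (Real.exp β - 1)
        = E ^ 2 * 1 + 2 * E * (-(E ^ 2)) * Real.exp (-β) + (-(E ^ 2)) ^ 2 * Real.exp (-β) := by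
      have h2 : Real.exp (2 * β) = E * E := by rw [two_mul, Real.exp_add]
      have hneg : Real.exp (-β) = E⁻¹ := Real.exp_neg β
      rw [h2, hneg]
      field_simp
      ring
    rw [hvar, ← hGauss E (-(E ^ 2))]
    have hT : Measurable (fun ω' => E * G1 ω' + (-(E ^ 2)) * G2 ω') :=
      (hGmeas.1.const_mul E).add (hGmeas.2.const_mul _)
    rw [integral_map hT.aemeasurable f.continuous.measurable.aestronglyMeasurable]
    refine integral_congr_ae (ae_of_all _ fun ω' => ?_)
    congr 1
    simp only [hgdef]
    ring
  rw [hstepA]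
  -- Step B: the linearized sequence converges
  have hstepB : Tendsto (fun n => ∫ ω, f (g (Z1 n ω, Z2 n ω)) ∂μ) atTop (𝓝 L) := by
    have h := hconv (f.compContinuous ⟨g, hgc⟩)
    simpa only [BoundedContinuousFunction.compContinuous_apply, ContinuousMap.coe_mk] using h
  -- Step C: the difference tends to 0
  have hmain : Tendsto (fun n => (∫ ω, f (Real.sqrt (n * v n) *
        ((lam n + Z1 n ω * y n) / (1 + Z2 n ω * y n) - lam n)) ∂μ)
      - (∫ ω, f (g (Z1 n ω, Z2 n ω)) ∂μ)) atTop (𝓝 0) := by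
    rw [NormedAddCommGroup.tendsto_nhds_zero]
    intro ε hε
    set η : ℝ := ε / (4 * (‖f‖ + 1)) with hηdef
    have hnf : (0:ℝ) ≤ ‖f‖ := norm_nonneg f
    have hη : 0 < η := by positivity
    clear_value η
    -- choose the cutoff radius M
    have hcut : Tendsto (fun M : ℕ =>
        ∫ ω', (1 - cutoff ((M : ℝ) + 1) (G1 ω', G2 ω')) ∂ν) atTop (𝓝 0) := by
      have h0 : (0:ℝ) = ∫ ω', (0:ℝ) ∂ν := by simp
      rw [h0]
      apply tendsto_integral_of_dominated_convergence (fun _ => (1:ℝ))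
      · intro M
        exact ((measurable_const.sub (((cutoff ((M:ℝ)+1)).continuous.measurable).comp
          (hGmeas.1.prodMk hGmeas.2)))).aestronglyMeasurable
      · exact integrable_const 1
      · intro M
        refine ae_of_all _ fun ω' => ?_
        rw [Real.norm_eq_abs, abs_le]
        constructor
        · linarith [cutoff_le_one ((M:ℝ)+1) (G1 ω', G2 ω')]
        · linarith [cutoff_nonneg ((M:ℝ)+1) (G1 ω', G2 ω')]
      · refine ae_of_all _ fun ω' => ?_
        have hev : ∀ᶠ M : ℕ in atTop,
            (1:ℝ) - cutoff ((M : ℝ) + 1) (G1 ω', G2 ω') = 0 := by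
          filter_upwards [eventually_ge_atTop ⌈‖(G1 ω', G2 ω')‖⌉₊] with M hM
          rw [cutoff_eq_one (by
            have := Nat.le_ceil ‖(G1 ω', G2 ω')‖
            have hM' : (⌈‖(G1 ω', G2 ω')‖⌉₊ : ℝ) ≤ (M : ℝ) := by exact_mod_cast hM
            linarith)]
          ring
        exact Tendsto.congr' (hev.mono fun M h => h.symm) tendsto_const_nhds
    obtain ⟨M, hM⟩ : ∃ M : ℕ,
        ∫ ω', (1 - cutoff ((M : ℝ) + 1) (G1 ω', G2 ω')) ∂ν < η :=
      (hcut.eventually_lt_const hη).exists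
    set R : ℝ := (M : ℝ) + 1 with hRdef
    have hR1 : (1:ℝ) ≤ R := by
      rw [hRdef]
      have : (0:ℝ) ≤ (M:ℝ) := Nat.cast_nonneg M
      linarith
    have hR : (0:ℝ) < R := by linarith
    clear_value R
    set R' : ℝ := E * R + E ^ 2 * R + 1 with hR'def
    have hR'pos : 0 < R' := by positivity
    clear_value R'
    -- uniform continuity of f on [-R', R']
    have hucf : UniformContinuousOn f (Set.Icc (-R') R') :=
      (isCompact_Icc).uniformContinuousOn_of_continuous f.continuous.continuousOn
    rw [Metric.uniformContinuousOn_iff] at hucf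
    obtain ⟨δ, hδ, hδf⟩ := hucf (ε / 4) (by positivity)
    set δ' : ℝ := min δ 1 with hδ'def
    have hδ'pos : 0 < δ' := lt_min hδ one_pos
    have hδ'le1 : δ' ≤ 1 := min_le_right _ _
    have hδ'leδ : δ' ≤ δ := min_le_left _ _
    clear_value δ'
    set C : ℝ := 4 * R + 2 * (E + E ^ 2) * R ^ 2 + 1 with hCdef
    have hC : 0 < C := by positivity
    clear_value C
    set δ₁ : ℝ := δ' / (2 * C) with hδ₁def
    have hδ₁ : 0 < δ₁ := by positivity
    clear_value δ₁
    -- eventual hypotheses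
    have e1 : ∀ᶠ n in atTop, dist (y n * Real.sqrt (n * v n)) E < δ₁ :=
      Metric.tendsto_nhds.mp hyv δ₁ hδ₁
    have hcoef2 : Tendsto (fun n : ℕ => y n * Real.sqrt (n * v n) * lam n)
        atTop (𝓝 (E * E)) := hyv.mul hlam
    have e2 : ∀ᶠ n in atTop, dist (y n * Real.sqrt (n * v n) * lam n) (E * E) < δ₁ :=
      Metric.tendsto_nhds.mp hcoef2 δ₁ hδ₁
    have e3 : ∀ᶠ n in atTop, dist (y n) 0 < min δ₁ (1 / (2 * R)) :=
      Metric.tendsto_nhds.mp hy0 _ (lt_min hδ₁ (by positivity))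
    have e4 : ∀ᶠ n in atTop, 1 - (∫ ω, cutoff R (Z1 n ω, Z2 n ω) ∂μ) < η := by
      have hχG : Integrable (fun ω' => cutoff R (G1 ω', G2 ω')) ν :=
        integrable_of_bound ν _ 1
          (((cutoff R).continuous.measurable).comp (hGmeas.1.prodMk hGmeas.2))
          (fun ω' => abs_le.mpr ⟨by linarith [cutoff_nonneg R (G1 ω', G2 ω')],
            cutoff_le_one R _⟩)
      have hlim : Tendsto (fun n => 1 - (∫ ω, cutoff R (Z1 n ω, Z2 n ω) ∂μ)) atTop
          (𝓝 (1 - ∫ ω', cutoff R (G1 ω', G2 ω') ∂ν)) :=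
        tendsto_const_nhds.sub (hconv (cutoff R))
      have heq : 1 - (∫ ω', cutoff R (G1 ω', G2 ω') ∂ν)
          = ∫ ω', (1 - cutoff R (G1 ω', G2 ω')) ∂ν := by
        rw [integral_sub (integrable_const 1) hχG]
        simp
      rw [heq] at hlim
      exact hlim.eventually_lt_const hM
    filter_upwards [e1, e2, e3, e4] with n h1 h2 h3 h4
    rw [Real.dist_eq] at h1 h2
    rw [Real.dist_eq, sub_zero, abs_of_pos (hy n)] at h3
    have h3a : y n < δ₁ := lt_of_lt_of_le h3 (min_le_left _ _)
    have h3b : y n ≤ 1 / (2 * R) := le_of_lt (lt_of_lt_of_le h3 (min_le_right _ _))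
    -- bound on g over the ball
    have hgbound : ∀ z : ℝ × ℝ, ‖z‖ ≤ R → |g z| ≤ E * R + E ^ 2 * R := by
      intro z hz
      have hz1 : |z.1| ≤ R := le_trans (by simpa using norm_fst_le z) hz
      have hz2 : |z.2| ≤ R := le_trans (by simpa using norm_snd_le z) hz
      simp only [hgdef]
      calc |E * z.1 - E ^ 2 * z.2| ≤ |E * z.1| + |E ^ 2 * z.2| := abs_sub _ _
        _ = E * |z.1| + E ^ 2 * |z.2| := by
            rw [abs_mul, abs_mul, abs_of_pos hE, abs_of_pos (by positivity : (0:ℝ) < E ^ 2)]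
        _ ≤ E * R + E ^ 2 * R := by
            have := abs_nonneg z.1
            have := abs_nonneg z.2
            nlinarith
    -- key uniform estimate on the ball
    have key : ∀ z : ℝ × ℝ, ‖z‖ ≤ R →
        |Real.sqrt (n * v n) * ((lam n + z.1 * y n) / (1 + z.2 * y n) - lam n) - g z|
          ≤ δ' / 2 := by
      intro z hz
      have hz1 : |z.1| ≤ R := le_trans (by simpa using norm_fst_le z) hz
      have hz2 : |z.2| ≤ R := le_trans (by simpa using norm_snd_le z) hz
      have h2' : |y n * Real.sqrt (n * v n) * lam n - E ^ 2| ≤ δ₁ := by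
        have hEE : E * E = E ^ 2 := by ring
        rw [hEE] at h2
        exact le_of_lt h2
      have hkey := lin_est hE hR (le_of_lt hδ₁) (hy n) (le_of_lt h1) h2'
        (le_of_lt h3a) h3b hz1 hz2
      have hb : (δ₁ * R + δ₁ * R + (E * R + E ^ 2 * R) * R * δ₁) * 2 ≤ δ' / 2 := by
        have hδC : δ₁ * C = δ' / 2 := by
          rw [hδ₁def]
          field_simp
        calc (δ₁ * R + δ₁ * R + (E * R + E ^ 2 * R) * R * δ₁) * 2
            = δ₁ * (C - 1) := by rw [hCdef]; ring
          _ ≤ δ₁ * C := by nlinarith [le_of_lt hδ₁]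
          _ = δ' / 2 := hδC
      rw [hgdef]
      exact le_trans hkey hb
    have keyf : ∀ z : ℝ × ℝ, ‖z‖ ≤ R →
        |f (Real.sqrt (n * v n) * ((lam n + z.1 * y n) / (1 + z.2 * y n) - lam n)) - f (g z)|
          ≤ ε / 4 := by
      intro z hz
      have h0 := key z hz
      have hgz := hgbound z hz
      have hgmem : g z ∈ Set.Icc (-R') R' := by
        rw [Set.mem_Icc]
        have := abs_le.mp hgz
        constructor <;> [skip; skip] <;>
          · rw [hR'def]; linarith [(abs_le.mp hgz).1, (abs_le.mp hgz).2]
      have hgnmem : Real.sqrt (n * v n) * ((lam n + z.1 * y n) / (1 + z.2 * y n) - lam n)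
          ∈ Set.Icc (-R') R' := by
        rw [Set.mem_Icc]
        have ha := abs_le.mp h0
        have hb := abs_le.mp hgz
        constructor <;> · rw [hR'def]; nlinarith [hδ'le1]
      have hdist : dist (Real.sqrt (n * v n) * ((lam n + z.1 * y n) / (1 + z.2 * y n) - lam n))
          (g z) < δ := by
        rw [Real.dist_eq]
        calc |_ - g z| ≤ δ' / 2 := h0
          _ < δ' := by linarith
          _ ≤ δ := hδ'leδ
      have := hδf _ hgnmem _ hgmem hdist
      rw [Real.dist_eq] at this
      linarith
    -- pointwise bound
    have hpt : ∀ ω,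
        |f (Real.sqrt (n * v n) * ((lam n + Z1 n ω * y n) / (1 + Z2 n ω * y n) - lam n))
          - f (g (Z1 n ω, Z2 n ω))|
        ≤ ε / 4 + 2 * ‖f‖ * (1 - cutoff R (Z1 n ω, Z2 n ω)) := by
      intro ω
      by_cases hc : ‖(Z1 n ω, Z2 n ω)‖ ≤ R
      · have hk := keyf (Z1 n ω, Z2 n ω) hc
        have hχ1 : cutoff R (Z1 n ω, Z2 n ω) ≤ 1 := cutoff_le_one R _
        nlinarith
      · rw [cutoff_eq_zero (le_of_lt (lt_of_not_ge hc))]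
        have hfa := f.norm_coe_le_norm
          (Real.sqrt (n * v n) * ((lam n + Z1 n ω * y n) / (1 + Z2 n ω * y n) - lam n))
        have hfb := f.norm_coe_le_norm (g (Z1 n ω, Z2 n ω))
        rw [Real.norm_eq_abs] at hfa hfb
        have := abs_sub
          (f (Real.sqrt (n * v n) * ((lam n + Z1 n ω * y n) / (1 + Z2 n ω * y n) - lam n)))
          (f (g (Z1 n ω, Z2 n ω)))
        linarith
    -- measurability and integrability
    have hmZ : Measurable (fun ω => (Z1 n ω, Z2 n ω)) := (hZmeas n).1.prodMk (hZmeas n).2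
    have hmgn : Measurable (fun ω => Real.sqrt (n * v n) *
        ((lam n + Z1 n ω * y n) / (1 + Z2 n ω * y n) - lam n)) := by
      apply Measurable.const_mul
      exact ((measurable_const.add ((hZmeas n).1.mul_const _)).div
        (measurable_const.add ((hZmeas n).2.mul_const _))).sub measurable_const
    have hA : Integrable (fun ω => f (Real.sqrt (n * v n) *
        ((lam n + Z1 n ω * y n) / (1 + Z2 n ω * y n) - lam n))) μ :=
      integrable_of_bound μ _ ‖f‖ (f.continuous.measurable.comp hmgn)
        (fun ω => by
          have := f.norm_coe_le_norm (Real.sqrt (n * v n) *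
            ((lam n + Z1 n ω * y n) / (1 + Z2 n ω * y n) - lam n))
          rwa [Real.norm_eq_abs] at this)
    have hB : Integrable (fun ω => f (g (Z1 n ω, Z2 n ω))) μ :=
      integrable_of_bound μ _ ‖f‖
        (f.continuous.measurable.comp (hgc.measurable.comp hmZ))
        (fun ω => by
          have := f.norm_coe_le_norm (g (Z1 n ω, Z2 n ω))
          rwa [Real.norm_eq_abs] at this)
    have hχZ : Integrable (fun ω => cutoff R (Z1 n ω, Z2 n ω)) μ :=
      integrable_of_bound μ _ 1 ((cutoff R).continuous.measurable.comp hmZ)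
        (fun ω => abs_le.mpr ⟨by linarith [cutoff_nonneg R (Z1 n ω, Z2 n ω)],
          cutoff_le_one R _⟩)
    have h1χ : Integrable (fun ω => (1:ℝ) - cutoff R (Z1 n ω, Z2 n ω)) μ :=
      (integrable_const 1).sub hχZ
    have h2χ : Integrable (fun ω => 2 * ‖f‖ * ((1:ℝ) - cutoff R (Z1 n ω, Z2 n ω))) μ :=
      h1χ.const_mul _
    have hRHSint : Integrable (fun ω => ε / 4 + 2 * ‖f‖ * (1 - cutoff R (Z1 n ω, Z2 n ω))) μ :=
      (integrable_const _).add h2χ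
    have hABnorm : Integrable (fun ω => ‖f (Real.sqrt (n * v n) *
        ((lam n + Z1 n ω * y n) / (1 + Z2 n ω * y n) - lam n))
        - f (g (Z1 n ω, Z2 n ω))‖) μ := (hA.sub hB).norm
    -- assemble
    rw [← integral_sub hA hB]
    calc ‖∫ ω, (f (Real.sqrt (n * v n) *
            ((lam n + Z1 n ω * y n) / (1 + Z2 n ω * y n) - lam n))
          - f (g (Z1 n ω, Z2 n ω))) ∂μ‖
        ≤ ∫ ω, ‖f (Real.sqrt (n * v n) *
            ((lam n + Z1 n ω * y n) / (1 + Z2 n ω * y n) - lam n))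
          - f (g (Z1 n ω, Z2 n ω))‖ ∂μ := norm_integral_le_integral_norm _
      _ ≤ ∫ ω, (ε / 4 + 2 * ‖f‖ * (1 - cutoff R (Z1 n ω, Z2 n ω))) ∂μ := by
          apply integral_mono hABnorm hRHSint
          intro ω
          simp only [Real.norm_eq_abs]
          exact hpt ω
      _ = ε / 4 + 2 * ‖f‖ * (1 - ∫ ω, cutoff R (Z1 n ω, Z2 n ω) ∂μ) := by
          rw [integral_add (integrable_const _) h2χ, integral_const, MeasureTheory.integral_const_mul,
            integral_sub (integrable_const 1) hχZ, integral_const]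
          simp
      _ < ε := by
          have ht : 1 - ∫ ω, cutoff R (Z1 n ω, Z2 n ω) ∂μ < η := h4
          have hmul : 2 * ‖f‖ * (1 - ∫ ω, cutoff R (Z1 n ω, Z2 n ω) ∂μ) ≤ 2 * ‖f‖ * η := by
            apply mul_le_mul_of_nonneg_left (le_of_lt ht) (by positivity)
          have hη4 : η * (4 * (‖f‖ + 1)) = ε := by
            rw [hηdef]
            field_simp
          have : 2 * ‖f‖ * η ≤ ε / 2 := by nlinarith [le_of_lt hη, hnf]
          linarith
  have := hmain.add hstepB
  simpa using this
end
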